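/- Let $R = k[x_1,\ldots,x_n]$ over a field $k$ and let $Q = (x_{i_1}^{a_1}, \ldots, x_{i_r}^{a_r})$ be an irreducible monomial ideal (all $a_j \ge 1$, distinct indices $i_j$). Set $a_s = \max_j a_j$. Then for each $m \in \mathbb{N}$, $\omega(Q^m) = (m-1)a_s + \omega(Q)$, where $\omega(Q) = a_1 + \cdots + a_r - r + 1$. -/

import Mathlib

open Ideal Finset MvPolynomial

/-- `I` is an `N`-absorbing ideal: whenever a product of `N+1` elements lies in `I`,
the product of some `N` of them (omitting one factor) lies in `I`. -/
def IsNAbsorbing {R : Type*} [CommRing R] (I : Ideal R) (N : ℕ) : Prop :=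
  ∀ x : Fin (N + 1) → R, (∏ i, x i) ∈ I →
    ∃ j, (∏ i ∈ Finset.univ.erase j, x i) ∈ I

/-- `ω(I)`: the least `N` such that `I` is `N`-absorbing. -/
noncomputable def omegaAbs {R : Type*} [CommRing R] (I : Ideal R) : ℕ :=
  sInf {N | IsNAbsorbing I N}

/-!
Let `P = (X (i j))ⱼ`. A polynomial lies in `Q^m` iff none of its monomials `X^μ` is *bad*, i.e.
has `∑ⱼ ⌊μ (i j) / a j⌋ < m`. Hence `Q^m` is `P`-primary: if `f ∉ P` and `g ∉ Q^m`, the `P`-free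
part of `f` times the bad part of `g` of least `P`-degree is nonzero, and its monomials are bad
monomials of `f * g`. So among `N + 1` factors with product in `Q^m`, either one lies outside `P`
and may be dropped, or all lie in `P` and any `N` of them multiply into `P^N`, which is contained
in `Q^m` once `N > (m - 1) a_s + ∑ⱼ (a j - 1)`. Conversely, for the maximal bad exponent
`c = (a j - 1)ⱼ + (m - 1) a_s e_s`, the product of `∑ⱼ X (i j)` with the `∑ c` variables making up
`X^c` lies in `Q^m`, but dropping any one factor leaves a polynomial containing `X^c`.
-/

theorem prod_univ_erase_eq_prod_update {M κ : Type*} [CommMonoid M] [Fintype κ] [DecidableEq κ]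
    (x : κ → M) (j : κ) : ∏ t ∈ univ.erase j, x t = ∏ t, Function.update x j 1 t := by
  rw [Finset.prod_update_of_mem (mem_univ j), one_mul, Finset.sdiff_singleton_eq_erase]

namespace IsNAbsorbing

variable {R : Type*} [CommRing R] {I : Ideal R} {N : ℕ}

theorem succ (h : IsNAbsorbing I N) : IsNAbsorbing I (N + 1) := by
  intro x hx
  obtain ⟨j, hj⟩ := h (Fin.cons (x 0 * x 1) fun t => x t.succ.succ)
    (by simpa [Fin.prod_univ_succ, mul_assoc] using hx)
  simp only [prod_univ_erase_eq_prod_update] at hj ⊢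
  induction j using Fin.cases with
  | zero =>
    refine ⟨0, ?_⟩
    simp only [Fin.update_cons_zero, Fin.prod_univ_succ, Fin.cons_succ] at hj
    simpa [Fin.prod_univ_succ] using I.mul_mem_left (x 1) hj
  | succ t =>
    refine ⟨t.succ.succ, ?_⟩
    simp only [← Fin.cons_update, Fin.prod_univ_succ, Fin.cons_zero, Fin.cons_succ] at hj
    simpa [Fin.prod_univ_succ, Function.update_apply, mul_assoc, (Fin.succ_ne_zero _).symm]
      using hj

theorem mono (h : IsNAbsorbing I N) {N' : ℕ} (hle : N ≤ N') : IsNAbsorbing I N' := by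
  induction N', hle using Nat.le_induction with
  | base => exact h
  | succ _ _ ih => exact ih.succ

theorem exists_prod_erase_mem {κ : Type*} [Fintype κ] [DecidableEq κ] (h : IsNAbsorbing I N)
    (hκ : Fintype.card κ = N + 1) (x : κ → R) (hx : ∏ t, x t ∈ I) :
    ∃ j, ∏ t ∈ univ.erase j, x t ∈ I := by
  let e := Fintype.equivFinOfCardEq hκ
  obtain ⟨j, hj⟩ := h (fun t => x (e.symm t)) (by rwa [e.symm.prod_comp])
  refine ⟨e.symm j, ?_⟩
  rw [prod_univ_erase_eq_prod_update] at hj ⊢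
  rw [← e.symm.prod_comp]
  convert hj using 2 with t
  simp [Function.update_apply, e.symm.injective.eq_iff]

end IsNAbsorbing

theorem omegaAbs_eq_succ {R : Type*} [CommRing R] {I : Ideal R} {N : ℕ}
    (h : IsNAbsorbing I (N + 1)) (h' : ¬IsNAbsorbing I N) : omegaAbs I = N + 1 := by
  refine le_antisymm (Nat.sInf_le h) (le_csInf ⟨_, h⟩ fun M hM => ?_)
  by_contra hlt
  exact h' (IsNAbsorbing.mono hM (by omega))

theorem Nat.sub_one_add_mul_add_div {a : ℕ} (ha : 0 < a) (q : ℕ) {e : ℕ} (he : e ≤ 1) :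
    (a - 1 + q * a + e) / a = q + e := by
  rw [add_right_comm, Nat.add_mul_div_right _ _ ha, add_comm q]
  congr 1
  interval_cases e
  · exact Nat.div_eq_of_lt (by omega)
  · rw [Nat.sub_add_cancel ha, Nat.div_self ha]

theorem sum_sub_one_add_ite_mul_add_div {ι : Type*} [Fintype ι] [DecidableEq ι] {a : ι → ℕ}
    (ha : ∀ j, 0 < a j) (s : ι) (q : ℕ) {e : ι → ℕ} (he : ∀ j, e j ≤ 1) :
    ∑ j, (a j - 1 + (if j = s then q else 0) * a j + e j) / a j = q + ∑ j, e j := by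
  simp only [fun j => Nat.sub_one_add_mul_add_div (ha j) (if j = s then q else 0) (he j),
    Finset.sum_add_distrib, Finset.sum_ite_eq', Finset.mem_univ, if_true]

theorem le_sum_div_of_lt_sum {ι : Type*} [Fintype ι] {a d : ι → ℕ} (ha : ∀ j, 0 < a j) {s : ι}
    (hs : ∀ j, a j ≤ a s) {m : ℕ} (h : (m - 1) * a s + ∑ j, (a j - 1) < ∑ j, d j) :
    m ≤ ∑ j, d j / a j := by
  by_contra! hlt
  have hcoord (j : ι) : d j ≤ d j / a j * a s + (a j - 1) := by
    have := Nat.div_add_mod (d j) (a j)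
    have := Nat.mod_lt (d j) (ha j)
    have := Nat.mul_le_mul_left (d j / a j) (hs j)
    rw [mul_comm] at this
    omega
  have := calc
    ∑ j, d j ≤ ∑ j, (d j / a j * a s + (a j - 1)) := Finset.sum_le_sum fun j _ => hcoord j
    _ = (∑ j, d j / a j) * a s + ∑ j, (a j - 1) := by rw [Finset.sum_add_distrib, Finset.sum_mul]
    _ ≤ (m - 1) * a s + ∑ j, (a j - 1) := by gcongr; omega
  omega

namespace MvPolynomial

variable {σ ι k : Type*}

section filter

variable [CommSemiring k] (p : (σ →₀ ℕ) → Prop) [DecidablePred p] (f : MvPolynomial σ k)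

noncomputable def filter : MvPolynomial σ k :=
  ∑ μ ∈ f.support with p μ, monomial μ (coeff μ f)

theorem coeff_filter (μ : σ →₀ ℕ) : coeff μ (filter p f) = if p μ then coeff μ f else 0 := by
  classical
  simp only [filter, coeff_sum, coeff_monomial, Finset.sum_ite_eq', Finset.mem_filter,
    mem_support_iff]
  split_ifs <;> simp_all

variable {p f} in
theorem mem_support_filter {μ : σ →₀ ℕ} : μ ∈ (filter p f).support ↔ μ ∈ f.support ∧ p μ := by
  simp only [mem_support_iff, coeff_filter]
  split_ifs <;> simp [*]

end filter

theorem add_single_apply [DecidableEq ι] {i : ι → σ} (hi : Function.Injective i) (μ : σ →₀ ℕ)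
    (j l : ι) (c : ℕ) :
    (μ + Finsupp.single (i j) c) (i l) = μ (i l) + if l = j then c else 0 := by
  classical
  simp only [Finsupp.add_apply, Finsupp.single_apply, hi.eq_iff, @eq_comm _ j]

variable [Fintype ι] (i : ι → σ) (a : ι → ℕ)

/-- `X ^ μ` lies in `spanXPow k i a ^ m` exactly when `m ≤ expOrder i a μ`; `expOrder i 1 μ` is
the degree of `X ^ μ` in the variables `X (i j)`. -/
def expOrder (μ : σ →₀ ℕ) : ℕ := ∑ j, μ (i j) / a j

variable (k) in
noncomputable def spanXPow [CommSemiring k] : Ideal (MvPolynomial σ k) :=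
  Ideal.span (Set.range fun j => X (i j) ^ a j)

variable {i a}

theorem expOrder_mono {μ ν : σ →₀ ℕ} (h : μ ≤ ν) : expOrder i a μ ≤ expOrder i a ν :=
  Finset.sum_le_sum fun j _ => Nat.div_le_div_right (h (i j))

theorem expOrder_add_single (hi : Function.Injective i) {j : ι} (hj : 0 < a j) (μ : σ →₀ ℕ) :
    expOrder i a (μ + Finsupp.single (i j) (a j)) = expOrder i a μ + 1 := by
  classical
  have h (l : ι) : (μ + Finsupp.single (i j) (a j)) (i l) / a l =
      μ (i l) / a l + if l = j then 1 else 0 := by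
    rw [add_single_apply hi]
    split_ifs with hl
    · subst hl; exact Nat.add_div_right _ hj
    · rfl
  simp only [expOrder, h, Finset.sum_add_distrib, Finset.sum_ite_eq', Finset.mem_univ, if_true]

theorem expOrder_one (μ : σ →₀ ℕ) : expOrder i 1 μ = ∑ j, μ (i j) := by
  simp [expOrder]

theorem expOrder_one_add (μ ν : σ →₀ ℕ) :
    expOrder i 1 (μ + ν) = expOrder i 1 μ + expOrder i 1 ν := by
  simp [expOrder_one, Finset.sum_add_distrib]

theorem expOrder_one_eq_zero_iff {μ : σ →₀ ℕ} : expOrder i 1 μ = 0 ↔ ∀ j, μ (i j) = 0 := by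
  simp [expOrder_one, Finset.sum_eq_zero_iff]

theorem expOrder_add_of_expOrder_one_eq_zero {μ : σ →₀ ℕ} (hμ : expOrder i 1 μ = 0)
    (ν : σ →₀ ℕ) : expOrder i a (μ + ν) = expOrder i a ν := by
  simp [expOrder, expOrder_one_eq_zero_iff.1 hμ]

theorem spanXPow_pow_eq_span_monomial [CommSemiring k] (hi : Function.Injective i)
    (ha : ∀ j, 0 < a j) (m : ℕ) :
    spanXPow k i a ^ m = Ideal.span ((monomial · (1 : k)) '' {μ | m ≤ expOrder i a μ}) := by
  induction m with
  | zero =>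
    rw [pow_zero, Ideal.one_eq_top, eq_comm, Ideal.eq_top_iff_one]
    exact Ideal.subset_span ⟨0, Nat.zero_le _, rfl⟩
  | succ m ih =>
    rw [pow_succ, ih, spanXPow, Ideal.span_mul_span']
    apply le_antisymm <;> rw [Ideal.span_le]
    · rintro _ ⟨_, ⟨μ, hμ, rfl⟩, _, ⟨j, rfl⟩, rfl⟩
      refine Ideal.subset_span ⟨μ + Finsupp.single (i j) (a j), ?_, ?_⟩
      · simpa [expOrder_add_single hi (ha j)] using hμ
      · simp [X_pow_eq_monomial, monomial_mul]
    · rintro _ ⟨μ, hμ, rfl⟩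
      obtain ⟨j, -, hj⟩ : ∃ j ∈ Finset.univ, μ (i j) / a j ≠ 0 :=
        Finset.exists_ne_zero_of_sum_ne_zero
          (by simp only [Set.mem_ofPred_eq, expOrder] at hμ; omega)
      have hle : Finsupp.single (i j) (a j) ≤ μ := by
        simpa [Finsupp.single_le_iff, Nat.div_pos_iff, ha j] using Nat.pos_of_ne_zero hj
      rw [← tsub_add_cancel_of_le hle] at hμ ⊢
      refine Ideal.subset_span ⟨_, ⟨μ - Finsupp.single (i j) (a j), ?_, rfl⟩, _, ⟨j, rfl⟩, ?_⟩
      · simpa [expOrder_add_single hi (ha j)] using hμ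
      · simp [X_pow_eq_monomial, monomial_mul]

theorem mem_spanXPow_pow_iff [CommSemiring k] (hi : Function.Injective i) (ha : ∀ j, 0 < a j)
    {m : ℕ} {f : MvPolynomial σ k} :
    f ∈ spanXPow k i a ^ m ↔ ∀ μ ∈ f.support, m ≤ expOrder i a μ := by
  rw [spanXPow_pow_eq_span_monomial hi ha, mem_ideal_span_monomial_image]
  exact forall₂_congr fun μ _ =>
    ⟨fun ⟨_, hν, hle⟩ => hν.trans (expOrder_mono hle), fun h => ⟨μ, h, le_rfl⟩⟩

theorem monomial_mem_spanXPow_pow_iff [CommSemiring k] [Nontrivial k]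
    (hi : Function.Injective i) (ha : ∀ j, 0 < a j) {m : ℕ} {μ : σ →₀ ℕ} :
    monomial μ (1 : k) ∈ spanXPow k i a ^ m ↔ m ≤ expOrder i a μ := by
  classical
  simp [mem_spanXPow_pow_iff hi ha, support_monomial]

theorem mem_spanXPow_one_iff [CommSemiring k] (hi : Function.Injective i)
    {f : MvPolynomial σ k} :
    f ∈ spanXPow k i 1 ↔ ∀ μ ∈ f.support, expOrder i 1 μ ≠ 0 := by
  simpa [Nat.one_le_iff_ne_zero] using
    mem_spanXPow_pow_iff (k := k) (a := 1) hi (fun _ => one_pos) (m := 1) (f := f)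

theorem spanXPow_one_pow_le_spanXPow_pow [CommSemiring k] (hi : Function.Injective i)
    (ha : ∀ j, 0 < a j) {s : ι} (hs : ∀ j, a j ≤ a s) {m N : ℕ}
    (hN : (m - 1) * a s + ∑ j, (a j - 1) < N) : spanXPow k i 1 ^ N ≤ spanXPow k i a ^ m := by
  intro f hf
  rw [mem_spanXPow_pow_iff (a := 1) hi (fun _ => one_pos)] at hf
  rw [mem_spanXPow_pow_iff hi ha]
  exact fun μ hμ =>
    le_sum_div_of_lt_sum ha hs (hN.trans_le (by simpa [expOrder_one] using hf μ hμ))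

theorem coeff_mul_eq_coeff_filter_mul_filter [CommSemiring k] {m d : ℕ}
    {f g : MvPolynomial σ k} (hmin : ∀ β ∈ g.support, expOrder i a β < m → d ≤ expOrder i 1 β)
    {ν : σ →₀ ℕ} (hν : expOrder i a ν < m) (hνd : expOrder i 1 ν = d) :
    coeff ν (f * g) = coeff ν (filter (expOrder i 1 · = 0) f *
      filter (fun μ => expOrder i a μ < m ∧ expOrder i 1 μ = d) g) := by
  classical
  rw [coeff_mul, coeff_mul]
  refine Finset.sum_congr rfl fun ⟨α, β⟩ hab => ?_
  simp only [Finset.HasAntidiagonal.mem_antidiagonal] at hab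
  have hdeg : expOrder i 1 α + expOrder i 1 β = d := by rw [← expOrder_one_add, hab, hνd]
  simp only [coeff_filter]
  by_cases hα : expOrder i 1 α = 0
  · have hβ : expOrder i a β = expOrder i a ν := by
      rw [← hab, expOrder_add_of_expOrder_one_eq_zero hα]
    simp [hα, hβ, hν]
    omega
  · have hg : coeff β g = 0 := by
      by_contra hne
      have := hmin β (mem_support_iff.2 hne) ((expOrder_mono (hab ▸ le_add_self)).trans_lt hν)
      omega
    simp [hα, hg]

theorem mem_spanXPow_pow_of_mul_mem [CommRing k] [IsDomain k] (hi : Function.Injective i)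
    (ha : ∀ j, 0 < a j) {m : ℕ} {f g : MvPolynomial σ k} (hf : f ∉ spanXPow k i 1)
    (hfg : f * g ∈ spanXPow k i a ^ m) : g ∈ spanXPow k i a ^ m := by
  classical
  rw [mem_spanXPow_one_iff hi] at hf
  push Not at hf
  obtain ⟨ζ, hζ, hζ0⟩ := hf
  rw [mem_spanXPow_pow_iff hi ha] at hfg ⊢
  by_contra! hg
  obtain ⟨β₀, hβ₀, hmin⟩ := (g.support.filter (expOrder i a · < m)).exists_min_image
    (expOrder i 1) (by simpa [Finset.Nonempty] using hg)
  rw [Finset.mem_filter] at hβ₀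
  set f₀ := filter (expOrder i 1 · = 0) f
  set h := filter (fun μ => expOrder i a μ < m ∧ expOrder i 1 μ = expOrder i 1 β₀) g
  have hf₀ : f₀ ≠ 0 := ne_zero_iff.2 ⟨ζ, mem_support_iff.1 (mem_support_filter.2 ⟨hζ, hζ0⟩)⟩
  have hh : h ≠ 0 :=
    ne_zero_iff.2 ⟨β₀, mem_support_iff.1 (mem_support_filter.2 ⟨hβ₀.1, hβ₀.2, rfl⟩)⟩
  obtain ⟨ν, hν⟩ := support_nonempty.2 (mul_ne_zero hf₀ hh)
  obtain ⟨α, hα, β, hβ, rfl⟩ := Finset.mem_add.1 (support_mul _ _ hν)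
  obtain ⟨-, hα0⟩ := mem_support_filter.1 hα
  obtain ⟨-, hβbad, hβd⟩ := mem_support_filter.1 hβ
  have hbad : expOrder i a (α + β) < m := by rwa [expOrder_add_of_expOrder_one_eq_zero hα0]
  have hcoeff := coeff_mul_eq_coeff_filter_mul_filter (f := f)
    (fun β hβ hβm => hmin β (Finset.mem_filter.2 ⟨hβ, hβm⟩)) hbad
    (by rw [expOrder_one_add, hα0, hβd, zero_add])
  exact (hfg _ (mem_support_iff.2 (hcoeff ▸ mem_support_iff.1 hν))).not_gt hbad

theorem isNAbsorbing_spanXPow_pow [CommRing k] [IsDomain k] (hi : Function.Injective i)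
    (ha : ∀ j, 0 < a j) {s : ι} (hs : ∀ j, a j ≤ a s) (m : ℕ) :
    IsNAbsorbing (spanXPow k i a ^ m) ((m - 1) * a s + ∑ j, (a j - 1) + 1) := by
  intro x hx
  by_cases hP : ∃ t, x t ∉ spanXPow k i 1
  · obtain ⟨t, ht⟩ := hP
    refine ⟨t, mem_spanXPow_pow_of_mul_mem hi ha ht ?_⟩
    rwa [Finset.mul_prod_erase _ _ (Finset.mem_univ t)]
  · push Not at hP
    refine ⟨0, spanXPow_one_pow_le_spanXPow_pow hi ha hs (Nat.lt_succ_self _) ?_⟩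
    simpa [Finset.prod_const, Finset.card_erase_of_mem] using
      Ideal.prod_mem_prod (s := univ.erase 0) (I := fun _ => spanXPow k i 1) fun t _ => hP t

theorem sum_single_apply (hi : Function.Injective i) (c : ι → ℕ) (l : ι) :
    (∑ j, Finsupp.single (i j) (c j)) (i l) = c l := by
  classical
  simp [Finsupp.finsetSum_apply, Finsupp.single_apply, hi.eq_iff]

theorem coeff_single_sum_X [CommSemiring k] (hi : Function.Injective i) (u : ι) :
    coeff (Finsupp.single (i u) 1) (∑ j, X (i j) : MvPolynomial σ k) = 1 := by
  classical
  simp [coeff_sum, coeff_X, Finsupp.single_left_inj one_ne_zero, hi.eq_iff]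

theorem sum_X_mul_monomial_tsub_notMem [CommSemiring k] [Nontrivial k]
    (hi : Function.Injective i) (ha : ∀ j, 0 < a j) {m : ℕ} {b : σ →₀ ℕ}
    (hb : expOrder i a b < m) {u : ι} (hu : Finsupp.single (i u) 1 ≤ b) :
    (∑ j, X (i j)) * monomial (b - Finsupp.single (i u) 1) (1 : k) ∉ spanXPow k i a ^ m := by
  rw [mem_spanXPow_pow_iff hi ha]
  push Not
  refine ⟨b, ?_, hb⟩
  rw [mem_support_iff, coeff_mul_monomial', if_pos tsub_le_self, tsub_tsub_cancel_of_le hu,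
    mul_one, coeff_single_sum_X hi]
  exact one_ne_zero

theorem not_isNAbsorbing_spanXPow_pow_of_maximal [CommRing k] [IsDomain k] [DecidableEq ι]
    (hi : Function.Injective i) (ha : ∀ j, 0 < a j) {m : ℕ} {c : ι → ℕ}
    (hc : ∑ j, c j / a j < m) (hcu : ∀ u, m ≤ ∑ j, (c j + if j = u then 1 else 0) / a j) :
    ¬IsNAbsorbing (spanXPow k i a ^ m) (∑ j, c j) := by
  intro habs
  set b : σ →₀ ℕ := ∑ j, Finsupp.single (i j) (c j)
  have hb : ∀ l, b (i l) = c l := sum_single_apply hi c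
  have hbm : expOrder i a b < m := by simpa [expOrder, hb] using hc
  have hXb : monomial b (1 : k) ∉ spanXPow k i a ^ m := by
    rwa [monomial_mem_spanXPow_pow_iff hi ha, not_le]
  set F : MvPolynomial σ k := ∑ j, X (i j)
  have hmem : F * monomial b 1 ∈ spanXPow k i a ^ m := by
    rw [Finset.sum_mul]
    refine Ideal.sum_mem _ fun u _ => ?_
    rw [X, monomial_mul, one_mul, add_comm, monomial_mem_spanXPow_pow_iff hi ha]
    simpa [expOrder, add_single_apply hi, hb] using hcu u
  let x : Option (Σ j, Fin (c j)) → MvPolynomial σ k := fun t => t.elim F fun p => X (i p.1)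
  have hprod : ∏ p : (Σ j, Fin (c j)), X (i p.1) = monomial b (1 : k) := by
    simp [Fintype.prod_sigma, X_pow_eq_monomial, b, monomial_sum_one]
  have hx : ∏ t, x t = F * monomial b 1 := by
    simp [x, Fintype.prod_option, hprod]
  obtain ⟨t, ht⟩ := habs.exists_prod_erase_mem (by simp [Fintype.card_sigma]) x (hx ▸ hmem)
  cases t with
  | none =>
    apply hXb
    simpa [x, prod_univ_erase_eq_prod_update, Fintype.prod_option, hprod] using ht
  | some p =>
    obtain ⟨u, v⟩ := p
    have hle : Finsupp.single (i u) 1 ≤ b := by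
      simpa [Finsupp.single_le_iff, hb, Nat.one_le_iff_ne_zero] using v.pos.ne'
    have hsplit : F * monomial b 1 = F * monomial (b - Finsupp.single (i u) 1) 1 * X (i u) := by
      rw [mul_assoc, X, monomial_mul, one_mul, tsub_add_cancel_of_le hle]
    have hdrop : ∏ t ∈ univ.erase (some ⟨u, v⟩), x t =
        F * monomial (b - Finsupp.single (i u) 1) 1 :=
      mul_right_cancel₀ (X_ne_zero (i u))
        (by rw [← hsplit, ← hx]; exact Finset.prod_erase_mul _ _ (Finset.mem_univ _))
    exact sum_X_mul_monomial_tsub_notMem hi ha hbm hle (hdrop ▸ ht)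

theorem omegaAbs_spanXPow_pow [CommRing k] [IsDomain k] (hi : Function.Injective i)
    (ha : ∀ j, 0 < a j) {s : ι} (hs : ∀ j, a j ≤ a s) {m : ℕ} (hm : 1 ≤ m) :
    omegaAbs (spanXPow k i a ^ m) = (m - 1) * a s + ∑ j, (a j - 1) + 1 := by
  classical
  refine omegaAbs_eq_succ (isNAbsorbing_spanXPow_pow hi ha hs m) ?_
  have hsum : ∑ j, (a j - 1 + (if j = s then m - 1 else 0) * a j) =
      (m - 1) * a s + ∑ j, (a j - 1) := by
    simp [Finset.sum_add_distrib, add_comm]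
  rw [← hsum]
  apply not_isNAbsorbing_spanXPow_pow_of_maximal hi ha
  · have := sum_sub_one_add_ite_mul_add_div ha s (m - 1) (e := 0) fun _ => zero_le_one
    simp only [Pi.zero_apply, add_zero, Finset.sum_const_zero] at this
    omega
  · intro u
    have := sum_sub_one_add_ite_mul_add_div ha s (m - 1) (e := fun j => if j = u then 1 else 0)
      fun j => by split_ifs <;> simp
    simp only [Finset.sum_ite_eq', Finset.mem_univ, if_true] at this
    omega

end MvPolynomial

theorem omega_pow_irreducible_monomial {k : Type*} [Field k] (n r : ℕ)
    (i : Fin r → Fin n) (hi : Function.Injective i) (a : Fin r → ℕ) (ha : ∀ j, 1 ≤ a j)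
    (s : Fin r) (hs : ∀ j, a j ≤ a s)
    (Q : Ideal (MvPolynomial (Fin n) k))
    (hQ : Q = Ideal.span (Set.range fun j => (X (i j) : MvPolynomial (Fin n) k) ^ a j)) :
    omegaAbs Q = ∑ j, a j - r + 1 ∧
      ∀ m : ℕ, 1 ≤ m → omegaAbs (Q ^ m) = (m - 1) * a s + omegaAbs Q := by
  change Q = spanXPow k i a at hQ
  subst hQ
  have hω (m : ℕ) (hm : 1 ≤ m) := omegaAbs_spanXPow_pow (k := k) hi ha hs hm
  have hω₁ : omegaAbs (spanXPow k i a) = ∑ j, (a j - 1) + 1 := by simpa using hω 1 le_rfl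
  have hsum : ∑ j, (a j - 1) = ∑ j, a j - r := by
    simp [Finset.sum_tsub_distrib _ fun j _ => ha j]
  exact ⟨hω₁.trans (by rw [hsum]), fun m hm => by rw [hω m hm, hω₁, add_assoc]⟩
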